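/- Let ξ = (ξ(i,j))_{1≤i,j≤p} be an ℕ^{p×p}-valued random variable with finite means, and for 1 ≤ i ≤ p let g^{(i)}(t) = E[t₁^{ξ(i,1)}⋯t_p^{ξ(i,p)}] for t ∈ [0,1]^p. Assume there exists ε > 0 such that P(ξ(i,j) ≥ 1) ≥ ε for all 1 ≤ i,j ≤ p. Then there exists a constant c₀ ≥ 1 such that for every 1 ≤ i ≤ p and every t ∈ [0,1)^p, 1/c₀ ≤ (1 − g^{(i)}(t)) / |1 − t| ≤ c₀, where |1 − t| = Σ_{j=1}^p (1 − t_j). -/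

import Mathlib

open MeasureTheory ProbabilityTheory Filter Set
open scoped ENNReal NNReal Topology

noncomputable section

namespace BPCLT

/-! ### Linear algebra preliminaries: `p × p` matrices, `L¹` norms, the simplex -/

/-- `p × p` real matrices, as functions. -/
abbrev Mat (p : ℕ) := Fin p → Fin p → ℝ

/-- `L¹` norm of a vector of `ℝ^p`. -/
def vnorm {p : ℕ} (x : Fin p → ℝ) : ℝ := ∑ i, |x i|

/-- `L¹` norm of a matrix. -/
def mnorm {p : ℕ} (M : Mat p) : ℝ := ∑ i, ∑ j, |M i j|

/-- `L¹` norm of the `j`-th column of a matrix, `|M(⬝,j)|`. -/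
def colNorm {p : ℕ} (M : Mat p) (j : Fin p) : ℝ := ∑ i, |M i j|

/-- Matrix product. -/
def matMul {p : ℕ} (A B : Mat p) : Mat p := fun i j => ∑ k, A i k * B k j

/-- Row vector times matrix, `x̃ M`. -/
def vecMulR {p : ℕ} (x : Fin p → ℝ) (M : Mat p) : Fin p → ℝ := fun j => ∑ i, x i * M i j

/-- Matrix times column vector, `M x`. -/
def mulVecC {p : ℕ} (M : Mat p) (x : Fin p → ℝ) : Fin p → ℝ := fun i => ∑ j, M i j * x j

/-- Partial products `M_{0,n} = M₀ M₁ ⋯ M_{n-1}` (with `M_{0,0} = I`). -/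
def prodM {p : ℕ} (M : ℕ → Mat p) : ℕ → Mat p
  | 0 => fun i j => if i = j then 1 else 0
  | n + 1 => matMul (prodM M n) (M n)

/-- `L¹`-normalization of a vector. -/
def nrmz {p : ℕ} (x : Fin p → ℝ) : Fin p → ℝ := (vnorm x)⁻¹ • x

/-- The simplex `𝕏` of nonnegative vectors of `L¹` norm one. -/
def simplex (p : ℕ) : Set (Fin p → ℝ) := {x | (∀ i, 0 ≤ x i) ∧ ∑ i, x i = 1}

/-- The semigroup `S⁺` of matrices with nonnegative entries. -/
def Splus (p : ℕ) : Set (Mat p) := {M | ∀ i j, 0 ≤ M i j}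

/-- The set `S⁺(B)` of matrices with positive entries whose entry ratios lie in `[1/B, B]`. -/
def SplusB (p : ℕ) (B : ℝ) : Set (Mat p) :=
  {M | (∀ i j, 0 < M i j) ∧ ∀ i j k l, 1 / B ≤ M i j / M k l ∧ M i j / M k l ≤ B}

/-- `v(M) = min_j ∑_i M(i,j)`. -/
def vmin {p : ℕ} (M : Mat p) : ℝ := ⨅ j, ∑ i, M i j

/-- `𝔫(M) = max (1 / v(M), |M|)`. -/
def nfrak {p : ℕ} (M : Mat p) : ℝ := max (1 / vmin M) (mnorm M)

/-- The simplex `𝕏` as a topological subspace of `ℝ^p`. -/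
abbrev Xs (p : ℕ) := {x : Fin p → ℝ // x ∈ simplex p}

/-- The (left) projective action `M ⬝ x = Mx / |Mx|` of a matrix on the simplex,
extended by a junk value where undefined. -/
def projActL {p : ℕ} (M : Mat p) (x : Xs p) : Xs p :=
  @dite (Xs p) (nrmz (mulVecC M x.1) ∈ simplex p) (Classical.propDecidable _)
    (fun h => ⟨_, h⟩) (fun _ => x)

/-- The contraction coefficient `[M]` of a matrix with respect to a distance `d` on `𝕏`. -/
def contrCoeff {p : ℕ} (d : Xs p → Xs p → ℝ) (M : Mat p) : ℝ :=
  ⨆ x : Xs p, ⨆ y : Xs p, d (projActL M x) (projActL M y)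

/-- The closed semigroup `T(B)` generated by `S⁺(B)`. -/
def TB (p : ℕ) (B : ℝ) : Set (Mat p) :=
  ⋂₀ {T : Set (Mat p) | IsClosed T ∧ SplusB p B ⊆ T ∧ ∀ M ∈ T, ∀ N ∈ T, matMul M N ∈ T}

/-! ### Offspring laws and environments -/

/-- An offspring law: a probability measure on `ℕ^p` (offspring counts by type). -/
abbrev OffLaw (p : ℕ) := {m : Measure (Fin p → ℕ) // IsProbabilityMeasure m}

/-- One environment component: the offspring laws of each of the `p` types.
This encodes a multivariate probability generating function `g = (g⁽ⁱ⁾)_{1 ≤ i ≤ p}`. -/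
abbrev EnvElt (p : ℕ) := Fin p → OffLaw p

/-- The mean matrix `M(i,j) = E[ξ(i,j)]` of an environment component. -/
def meanMat {p : ℕ} (ν : EnvElt p) : Mat p :=
  fun i j => (∫⁻ x, (x j : ℝ≥0∞) ∂(ν i).1).toReal

/-- Second moments `E[ξ(i,k) ξ(i,l)]`. -/
def secMom {p : ℕ} (ν : EnvElt p) (i k l : Fin p) : ℝ :=
  (∫⁻ x, ((x k * x l : ℕ) : ℝ≥0∞) ∂(ν i).1).toReal

/-- Hessian matrices `B⁽ⁱ⁾(k,l) = E[ξ(i,k)(ξ(i,l) - δ_{kl})]`. -/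
def hessB {p : ℕ} (ν : EnvElt p) (i k l : Fin p) : ℝ :=
  secMom ν i k l - (if k = l then meanMat ν i k else 0)

/-- `μ(ν) = ∑_i |B⁽ⁱ⁾|`. -/
def muB {p : ℕ} (ν : EnvElt p) : ℝ := ∑ i, ∑ k, ∑ l, |hessB ν i k l|

/-- `η(ν) = μ(ν) / |M(ν)|²`. -/
def etaB {p : ℕ} (ν : EnvElt p) : ℝ := muB ν / (mnorm (meanMat ν)) ^ 2

/-- The variance `σ²(i,j) = Var(ξ(i,j))`. -/
def varE {p : ℕ} (ν : EnvElt p) (i j : Fin p) : ℝ := secMom ν i j j - (meanMat ν i j) ^ 2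

/-- The class `𝒢_{ε,K}` of non-degenerate offspring distributions:
`P(ξ(i,j) ≥ 2) ≥ ε`, `P(ξ(i,⬝) = 0) ≥ ε` and `E[|ξ(i,⬝)|²] ≤ K` for all `i, j`. -/
def Gset (p : ℕ) (ε K : ℝ) : Set (EnvElt p) :=
  {ν | (∀ i j, ε ≤ ((ν i).1 {x | 2 ≤ x j}).toReal) ∧
       (∀ i, ε ≤ ((ν i).1 {x | ∀ j, x j = 0}).toReal) ∧
       (∀ i, (∫⁻ x, ((∑ j, x j : ℕ) : ℝ≥0∞) ^ 2 ∂(ν i).1) ≤ ENNReal.ofReal K)}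

/-- The one-step law of a Galton–Watson process: the distribution of the population vector of the
next generation, given the current population vector `z` and the offspring laws `ν`:
each of the `z i` particles of type `i` reproduces independently with law `ν i`. -/
def stepLaw {p : ℕ} (ν : EnvElt p) (z : Fin p → ℕ) : Measure (Fin p → ℕ) :=
  haveI : ∀ i, IsProbabilityMeasure (ν i).1 := fun i => (ν i).2
  Measure.map (fun ξ : (i : Fin p) → Fin (z i) → (Fin p → ℕ) => fun j => ∑ i, ∑ k, ξ i k j)
    (Measure.pi fun i => Measure.pi fun _ : Fin (z i) => (ν i).1)

/-- The (quenched) law of generation `n` of the Galton–Watson process in the varying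
environment `g`, starting from the deterministic population vector `z`. -/
def quenchedLaw {p : ℕ} (g : ℕ → EnvElt p) (z : Fin p → ℕ) : ℕ → Measure (Fin p → ℕ)
  | 0 => Measure.dirac z
  | n + 1 => (quenchedLaw g z n).bind (stepLaw (g n))

/-- The sequence of mean matrices of a (random) environment. -/
def envM {p : ℕ} {Ω : Type*} (env : ℕ → Ω → EnvElt p) : ℕ → Ω → Mat p :=
  fun n ω => meanMat (env n ω)

/-! ### The associated Markov walk -/

/-- The Markov walk `S_n(x̃, a) = a + ln |x̃ M_{0,n}|`. -/
def Sw {p : ℕ} {Ω : Type*} (Mseq : ℕ → Ω → Mat p) (x : Fin p → ℝ) (a : ℝ) (n : ℕ)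
    (ω : Ω) : ℝ :=
  a + Real.log (vnorm (vecMulR x (prodM (fun k => Mseq k ω) n)))

/-- The event `(τ_{x̃,a} > n) = (m_n > 0)`, i.e. `S_k(x̃,a) > 0` for `1 ≤ k ≤ n`. -/
def survW {p : ℕ} {Ω : Type*} (Mseq : ℕ → Ω → Mat p) (x : Fin p → ℝ) (a : ℝ) (n : ℕ) :
    Set Ω :=
  {ω | ∀ k, 1 ≤ k → k ≤ n → 0 < Sw Mseq x a k ω}

/-- The Markov chain `X_n = x̃ ⬝ M_{0,n}` on the simplex. -/
def XvecW {p : ℕ} {Ω : Type*} (Mseq : ℕ → Ω → Mat p) (x : Fin p → ℝ) (n : ℕ) (ω : Ω) :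
    Fin p → ℝ :=
  nrmz (vecMulR x (prodM (fun k => Mseq k ω) n))

/-! ### Hypotheses H1–H6 -/

/-- Membership in the support of a measure on a topological space. -/
def inSupport {α : Type*} [TopologicalSpace α] [MeasurableSpace α] (μ : Measure α)
    (M : α) : Prop :=
  ∀ U : Set α, IsOpen U → M ∈ U → μ U ≠ 0

variable {p : ℕ} {Ω : Type*} [MeasurableSpace Ω]

/-- H1(δ): `E[|ln 𝔫(M₁)|^{2+δ}] < ∞`. -/
def H1 (P : Measure Ω) (Mseq : ℕ → Ω → Mat p) (δ : ℝ) : Prop :=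
  Integrable (fun ω => |Real.log (nfrak (Mseq 1 ω))| ^ ((2 : ℝ) + δ)) P

/-- H2 (strong irreducibility): there is no affine subspace `𝒜` of `ℝ^p` such that
`𝒜 ∩ ℝ^p₊` is nonempty, bounded and invariant under all elements of the support of `μ`. -/
def H2 (P : Measure Ω) (Mseq : ℕ → Ω → Mat p) : Prop :=
  ¬ ∃ A : AffineSubspace ℝ (Fin p → ℝ),
      ((A : Set (Fin p → ℝ)) ∩ {x | ∀ i, 0 ≤ x i}).Nonempty ∧
      Bornology.IsBounded ((A : Set (Fin p → ℝ)) ∩ {x | ∀ i, 0 ≤ x i}) ∧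
      ∀ M : Mat p, inSupport (Measure.map (Mseq 1) P) M →
        ∀ x ∈ (A : Set (Fin p → ℝ)) ∩ {x | ∀ i, 0 ≤ x i},
          vecMulR x M ∈ (A : Set (Fin p → ℝ)) ∩ {x | ∀ i, 0 ≤ x i}

/-- H3(δ): the support of `μ` is contained in `S⁺(B)` with `B = 1/δ`. -/
def H3 (P : Measure Ω) (Mseq : ℕ → Ω → Mat p) (δ : ℝ) : Prop :=
  ∀ M : Mat p, inSupport (Measure.map (Mseq 1) P) M → M ∈ SplusB p (1 / δ)

/-- H4: the upper Lyapunov exponent `π_μ = lim (1/n) E[ln |M_{0,n}|]` equals `0`. -/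
def H4 (P : Measure Ω) (Mseq : ℕ → Ω → Mat p) : Prop :=
  Tendsto (fun n : ℕ => (∫ ω, Real.log (mnorm (prodM (fun k => Mseq k ω) n)) ∂P) / n)
    atTop (nhds 0)

/-- H5(δ): `μ{M : ∀ x̃ ∈ 𝕏, ln |x̃M| ≥ δ} > 0`. -/
def H5 (P : Measure Ω) (Mseq : ℕ → Ω → Mat p) (δ : ℝ) : Prop :=
  0 < Measure.map (Mseq 1) P {M : Mat p | ∀ x ∈ simplex p, δ ≤ Real.log (vnorm (vecMulR x M))}

/-- H6: `E[(μ₁/|M₁|²)(1 + ln⁺|M₁|)] < ∞`. -/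
def H6 (P : Measure Ω) (env : ℕ → Ω → EnvElt p) : Prop :=
  Integrable (fun ω => etaB (env 1 ω) * (1 + max (Real.log (mnorm (envM env 1 ω))) 0)) P

/-- The matrices `(M_n)` are i.i.d. -/
def IsIIDmat (P : Measure Ω) (Mseq : ℕ → Ω → Mat p) : Prop :=
  (∀ n, Measurable (Mseq n)) ∧ iIndepFun Mseq P ∧
    ∀ n, IdentDistrib (Mseq n) (Mseq 0) P P

/-- `σ² = lim (1/n) E[S_n(x̃,a)²] > 0` is the variance of the Markov walk. -/
def IsWalkVariance (P : Measure Ω) (Mseq : ℕ → Ω → Mat p) (σ : ℝ) : Prop :=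
  0 < σ ∧ ∀ x ∈ simplex p, ∀ a : ℝ, 0 ≤ a →
    Tendsto (fun n : ℕ => (∫ ω, (Sw Mseq x a n ω) ^ 2 ∂P) / n) atTop (nhds (σ ^ 2))

/-- `V(x̃,a) = lim_n E_{x̃,a}[S_n ; τ > n]` (definition of the harmonic function `V`). -/
def IsHarmonicLimitV (P : Measure Ω) (Mseq : ℕ → Ω → Mat p)
    (V : (Fin p → ℝ) → ℝ → ℝ) : Prop :=
  ∀ x ∈ simplex p, ∀ a : ℝ, 0 ≤ a →
    Tendsto (fun n => ∫ ω in survW Mseq x a n, Sw Mseq x a n ω ∂P) atTop (nhds (V x a))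

/-- The Rayleigh cumulative distribution function
`Φ⁺(t/σ) = ∫_0^{t/σ} s e^{-s²/2} ds = 1 - e^{-t²/(2σ²)}`. -/
def rayleighCDF (σ t : ℝ) : ℝ := 1 - Real.exp (-(t ^ 2) / (2 * σ ^ 2))

/-- Conditional probability `P(A | B)` as a real number. -/
def condProb (P : Measure Ω) (A B : Set Ω) : ℝ := (P (A ∩ B)).toReal / (P B).toReal

/-! ### Branching processes in random and varying environment -/

/-- The σ-algebra `ℱ_n = σ(f_k, Z_k : 0 ≤ k ≤ n)`. -/
def filtEnvZ (env : ℕ → Ω → EnvElt p) (Z : ℕ → Ω → (Fin p → ℕ)) (n : ℕ) :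
    MeasurableSpace Ω :=
  (⨆ k ∈ Finset.range (n + 1), MeasurableSpace.comap (env k) inferInstance) ⊔
    ⨆ k ∈ Finset.range (n + 1), MeasurableSpace.comap (Z k) inferInstance

/-- The σ-algebra `σ(Z_k : 0 ≤ k ≤ n)`. -/
def filtZ (Z : ℕ → Ω → (Fin p → ℕ)) (n : ℕ) : MeasurableSpace Ω :=
  ⨆ k ∈ Finset.range (n + 1), MeasurableSpace.comap (Z k) inferInstance

/-- A `p`-type branching process in random environment: an i.i.d. sequence of random
offspring laws `env`, and for each starting population `z` a process `Z z` such that,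
conditionally on the past and on the environment, generation `n+1` is obtained from
generation `n` by independent reproduction according to the offspring laws `env n`. -/
structure BPRE (p : ℕ) (Ω : Type*) [MeasurableSpace Ω] (P : Measure Ω) where
  env : ℕ → Ω → EnvElt p
  env_meas : ∀ n, Measurable (env n)
  env_indep : iIndepFun env P
  env_ident : ∀ n, IdentDistrib (env n) (env 0) P P
  Z : (Fin p → ℕ) → ℕ → Ω → (Fin p → ℕ)
  Z_meas : ∀ z n, Measurable (Z z n)
  Z_zero : ∀ z ω, Z z 0 ω = z
  Z_branch : ∀ z n (s : Set (Fin p → ℕ)), MeasurableSet s →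
    (fun ω => ((stepLaw (env n ω) (Z z n ω)) s).toReal)
      =ᵐ[P] P[fun ω => s.indicator (fun _ => (1 : ℝ)) (Z z (n + 1) ω)|filtEnvZ env (Z z) n]

/-- The random mean matrices `M_n` of a branching process in random environment. -/
def BPRE.Mseq {P : Measure Ω} (X : BPRE p Ω P) : ℕ → Ω → Mat p := envM X.env

/-- The survival event `(|Z_n(z̃,⬝)| > 0)`. -/
def BPRE.alive {P : Measure Ω} (X : BPRE p Ω P) (z : Fin p → ℕ) (n : ℕ) : Set Ω :=
  {ω | 0 < ∑ j, X.Z z n ω j}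

/-- The quenched survival probability `q_{n,z̃}^f = P(|Z_n(z̃,⬝)| > 0 / f₀, …, f_{n-1})`. -/
def BPRE.qSurv {P : Measure Ω} (X : BPRE p Ω P) (z : Fin p → ℕ) (n : ℕ) (ω : Ω) : ℝ :=
  ((quenchedLaw (fun k => X.env k ω) z n) {w | w ≠ 0}).toReal

/-- A `p`-type Galton–Watson process in the (deterministic) varying environment `g`,
with processes `Z i` started from a single ancestor of type `i`. -/
structure GWVE (p : ℕ) (Ω : Type*) [MeasurableSpace Ω] (P : Measure Ω)
    (g : ℕ → EnvElt p) where
  Z : Fin p → ℕ → Ω → (Fin p → ℕ)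
  Z_meas : ∀ i n, Measurable (Z i n)
  Z_zero : ∀ i ω, Z i 0 ω = fun j => if j = i then 1 else 0
  Z_branch : ∀ i n (s : Set (Fin p → ℕ)), MeasurableSet s →
    (fun ω => ((stepLaw (g n) (Z i n ω)) s).toReal)
      =ᵐ[P] P[fun ω => s.indicator (fun _ => (1 : ℝ)) (Z i (n + 1) ω)|filtZ (Z i) n]

/-- Extinction probability `q^g_i` of the process started from one type-`i` ancestor. -/
def GWVE.qext {P : Measure Ω} {g : ℕ → EnvElt p} (X : GWVE p Ω P g) (i : Fin p) : ℝ :=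
  (P {ω | ∃ n, ∀ j, X.Z i n ω j = 0}).toReal

end BPCLT

open BPCLT

/-!
Since `1 - ∏ xⱼ ≤ ∑ (1 - xⱼ)` on `[0,1]^p` and `1 - tⁿ ≤ n (1 - t)` (Bernoulli), pointwise
`1 - ∏ tⱼ^{ξ(i,j)} ≤ ∑ ξ(i,j) (1 - tⱼ)`; taking expectations bounds `1 - g⁽ⁱ⁾(t)` above by the
largest mean times `|1 - t|`. Conversely, on `{ξ(i,j) ≥ 1}` the monomial is at most `tⱼ`, so
`1 - g⁽ⁱ⁾(t) ≥ ε (1 - tⱼ)` for every `j`; summing over `j` gives `ε |1 - t| ≤ p (1 - g⁽ⁱ⁾(t))`.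
-/

theorem one_sub_prod_le_sum_one_sub {ι : Type*} (s : Finset ι) {x : ι → ℝ}
    (h0 : ∀ j ∈ s, 0 ≤ x j) (h1 : ∀ j ∈ s, x j ≤ 1) :
    1 - ∏ j ∈ s, x j ≤ ∑ j ∈ s, (1 - x j) := by
  classical
  induction s using Finset.induction_on with
  | empty => simp
  | insert a s ha ih =>
    rw [Finset.prod_insert ha, Finset.sum_insert ha]
    have hs0 : ∀ j ∈ s, 0 ≤ x j := fun j hj => h0 j (Finset.mem_insert_of_mem hj)
    have hs1 : ∀ j ∈ s, x j ≤ 1 := fun j hj => h1 j (Finset.mem_insert_of_mem hj)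
    have ha0 := h0 a (Finset.mem_insert_self a s)
    have hprod_le_one : ∏ j ∈ s, x j ≤ 1 := Finset.prod_le_one hs0 hs1
    nlinarith [ih hs0 hs1, mul_nonneg (sub_nonneg.2 (h1 a (Finset.mem_insert_self a s)))
      (sub_nonneg.2 hprod_le_one)]

section Monomial

variable {ι : Type*} [Fintype ι] {t : ι → ℝ}

theorem prod_pow_nonneg (ht : ∀ j, t j ∈ Icc 0 1) (n : ι → ℕ) : 0 ≤ ∏ j, t j ^ n j :=
  Finset.prod_nonneg fun j _ => pow_nonneg (ht j).1 _

theorem prod_pow_le_one (ht : ∀ j, t j ∈ Icc 0 1) (n : ι → ℕ) : ∏ j, t j ^ n j ≤ 1 :=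
  Finset.prod_le_one (fun j _ => pow_nonneg (ht j).1 _) fun j _ => pow_le_one₀ (ht j).1 (ht j).2

theorem one_sub_prod_pow_le (ht : ∀ j, t j ∈ Icc 0 1) (n : ι → ℕ) :
    1 - ∏ j, t j ^ n j ≤ ∑ j, n j * (1 - t j) :=
  calc 1 - ∏ j, t j ^ n j ≤ ∑ j, (1 - t j ^ n j) :=
        one_sub_prod_le_sum_one_sub _ (fun j _ => pow_nonneg (ht j).1 _)
          fun j _ => pow_le_one₀ (ht j).1 (ht j).2
    _ ≤ ∑ j, n j * (1 - t j) := Finset.sum_le_sum fun j _ => by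
        linarith [one_add_mul_sub_le_pow (by linarith [(ht j).1] : -1 ≤ t j) (n j)]

theorem prod_pow_le_of_one_le (ht : ∀ j, t j ∈ Icc 0 1) {n : ι → ℕ} {j : ι} (hj : 1 ≤ n j) :
    ∏ k, t k ^ n k ≤ t j := by
  classical
  rw [← Finset.mul_prod_erase _ _ (Finset.mem_univ j)]
  calc t j ^ n j * ∏ k ∈ Finset.univ.erase j, t k ^ n k ≤ t j ^ n j * 1 := by
        gcongr
        · exact pow_nonneg (ht j).1 _
        · exact Finset.prod_le_one (fun k _ => pow_nonneg (ht k).1 _)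
            fun k _ => pow_le_one₀ (ht k).1 (ht k).2
    _ ≤ t j := by rw [mul_one]; exact pow_le_of_le_one (ht j).1 (ht j).2 (by omega)

end Monomial

section GeneratingFunction

variable {Ω ι : Type*} [MeasurableSpace Ω] {P : Measure Ω} [IsProbabilityMeasure P] [Fintype ι]
  {X : Ω → ι → ℕ} {t : ι → ℝ}

theorem integrable_prod_pow (hX : Measurable X) (ht : ∀ j, t j ∈ Icc 0 1) :
    Integrable (fun ω => ∏ j, t j ^ X ω j) P := by
  refine (integrable_const (1 : ℝ)).mono' ?_ (ae_of_all _ fun ω => ?_)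
  · exact (Finset.measurable_prod _ fun j _ =>
      measurable_from_nat.comp (hX.eval (a := j))).aestronglyMeasurable
  · rw [Real.norm_eq_abs, abs_of_nonneg (prod_pow_nonneg ht _)]
    exact prod_pow_le_one ht _

theorem one_sub_integral_prod_pow_le (hX : Measurable X)
    (hmean : ∀ j, Integrable (fun ω => (X ω j : ℝ)) P) {C : ℝ}
    (hC : ∀ j, ∫ ω, (X ω j : ℝ) ∂P ≤ C)
    (ht : ∀ j, t j ∈ Icc 0 1) :
    1 - ∫ ω, ∏ j, t j ^ X ω j ∂P ≤ C * ∑ j, (1 - t j) :=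
  calc 1 - ∫ ω, ∏ j, t j ^ X ω j ∂P = ∫ ω, (1 - ∏ j, t j ^ X ω j) ∂P := by
        rw [integral_sub (integrable_const 1) (integrable_prod_pow hX ht), integral_const,
          probReal_univ, one_smul]
    _ ≤ ∫ ω, ∑ j, (X ω j : ℝ) * (1 - t j) ∂P :=
        integral_mono ((integrable_const 1).sub (integrable_prod_pow hX ht))
          (integrable_finsetSum _ fun j _ => (hmean j).mul_const _)
          fun ω => one_sub_prod_pow_le ht (X ω)
    _ = ∑ j, (∫ ω, (X ω j : ℝ) ∂P) * (1 - t j) := by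
        rw [integral_finsetSum _ fun j _ => (hmean j).mul_const _]
        simp only [integral_mul_const]
    _ ≤ C * ∑ j, (1 - t j) := by
        rw [Finset.mul_sum]
        exact Finset.sum_le_sum fun j _ =>
          mul_le_mul_of_nonneg_right (hC j) (sub_nonneg.2 (ht j).2)

theorem measureReal_mul_le_one_sub_integral_prod_pow (hX : Measurable X)
    (ht : ∀ j, t j ∈ Icc 0 1) (j : ι) :
    P.real {ω | 1 ≤ X ω j} * (1 - t j) ≤ 1 - ∫ ω, ∏ k, t k ^ X ω k ∂P := by
  have hA : MeasurableSet {ω | 1 ≤ X ω j} := measurableSet_le measurable_const hX.eval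
  calc P.real {ω | 1 ≤ X ω j} * (1 - t j)
      = ∫ ω, {ω | 1 ≤ X ω j}.indicator (fun _ => 1 - t j) ω ∂P := by
        rw [integral_indicator_const _ hA, smul_eq_mul]
    _ ≤ ∫ ω, (1 - ∏ k, t k ^ X ω k) ∂P := by
        refine integral_mono ((integrable_const _).indicator hA)
          ((integrable_const 1).sub (integrable_prod_pow hX ht)) fun ω => ?_
        by_cases hω : 1 ≤ X ω j
        · simp only [Set.indicator_of_mem (show ω ∈ {ω | 1 ≤ X ω j} from hω)]
          linarith [prod_pow_le_of_one_le ht hω]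
        · simp only [Set.indicator_of_notMem (show ω ∉ {ω | 1 ≤ X ω j} from hω)]
          linarith [prod_pow_le_one ht (X ω)]
    _ = 1 - ∫ ω, ∏ k, t k ^ X ω k ∂P := by
        rw [integral_sub (integrable_const 1) (integrable_prod_pow hX ht), integral_const,
          probReal_univ, one_smul]

theorem mul_sum_one_sub_le_card_mul_one_sub_integral_prod_pow (hX : Measurable X)
    (ht : ∀ j, t j ∈ Icc 0 1) {ε : ℝ} (hε : ∀ j, ε ≤ P.real {ω | 1 ≤ X ω j}) :
    ε * ∑ j, (1 - t j) ≤ Fintype.card ι * (1 - ∫ ω, ∏ k, t k ^ X ω k ∂P) :=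
  calc ε * ∑ j, (1 - t j) ≤ ∑ _j : ι, (1 - ∫ ω, ∏ k, t k ^ X ω k ∂P) := by
        rw [Finset.mul_sum]
        exact Finset.sum_le_sum fun j _ =>
          (mul_le_mul_of_nonneg_right (hε j) (sub_nonneg.2 (ht j).2)).trans
            (measureReal_mul_le_one_sub_integral_prod_pow hX ht j)
    _ = Fintype.card ι * (1 - ∫ ω, ∏ k, t k ^ X ω k ∂P) := by
        rw [Finset.sum_const, Finset.card_univ, nsmul_eq_mul]

end GeneratingFunction

/-- **Lemma (two-sided bound for `(1 - g⁽ⁱ⁾(t))/|1 - t|`).**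
Let `ξ` be an `ℕ^{p×p}`-valued random variable with finite means and generating functions
`g⁽ⁱ⁾(t) = E[t₁^{ξ(i,1)} ⋯ t_p^{ξ(i,p)}]`.  If `P(ξ(i,j) ≥ 1) ≥ ε` for all `i, j` and
some `ε > 0`, then there is `c₀ ≥ 1` such that for every `i` and every `t ∈ [0,1)^p`,
`1/c₀ ≤ (1 - g⁽ⁱ⁾(t)) / |1 - t| ≤ c₀`, where `|1 - t| = ∑_j (1 - t_j)`. -/
theorem generating_function_two_sided_bound
    {p : ℕ} (hp : 2 ≤ p) {Ω : Type*} [MeasurableSpace Ω] (P : Measure Ω)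
    [IsProbabilityMeasure P]
    (ξ : Ω → Fin p → Fin p → ℕ) (hmeas : Measurable ξ)
    (hmean : ∀ i j, Integrable (fun ω => (ξ ω i j : ℝ)) P)
    (ε : ℝ) (hε : 0 < ε)
    (hξ : ∀ i j, ε ≤ (P {ω | 1 ≤ ξ ω i j}).toReal) :
    ∃ c₀ : ℝ, 1 ≤ c₀ ∧ ∀ i : Fin p, ∀ t : Fin p → ℝ, (∀ j, t j ∈ Set.Ico (0 : ℝ) 1) →
      1 / c₀ ≤ (1 - ∫ ω, ∏ j, (t j) ^ (ξ ω i j) ∂P) / (∑ j, (1 - t j)) ∧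
      (1 - ∫ ω, ∏ j, (t j) ^ (ξ ω i j) ∂P) / (∑ j, (1 - t j)) ≤ c₀ := by
  set C : ℝ := ∑ ij : Fin p × Fin p, ∫ ω, (ξ ω ij.1 ij.2 : ℝ) ∂P
  have hC : ∀ i j, ∫ ω, (ξ ω i j : ℝ) ∂P ≤ C := fun i j =>
    Finset.single_le_sum (f := fun ij : Fin p × Fin p => ∫ ω, (ξ ω ij.1 ij.2 : ℝ) ∂P)
      (fun _ _ => integral_nonneg fun ω => Nat.cast_nonneg _) (Finset.mem_univ (i, j))
  refine ⟨max 1 (max (p / ε) C), le_max_left _ _, fun i t ht => ?_⟩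
  have ht' : ∀ j, t j ∈ Icc 0 1 := fun j => Ico_subset_Icc_self (ht j)
  have hS : 0 < ∑ j, (1 - t j) :=
    Finset.sum_pos (fun j _ => sub_pos.2 (ht j).2) ⟨⟨0, by omega⟩, Finset.mem_univ _⟩
  have upper := one_sub_integral_prod_pow_le hmeas.eval (hmean i) (hC i) ht'
  have lower := mul_sum_one_sub_le_card_mul_one_sub_integral_prod_pow hmeas.eval ht' (hξ i)
  rw [Fintype.card_fin] at lower
  constructor
  · refine le_trans (b := ε / p) ?_ ?_
    · rw [one_div_le (by positivity) (by positivity), one_div_div]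
      exact (le_max_left _ _).trans (le_max_right _ _)
    · rw [div_le_div_iff₀ (by positivity) hS]
      linarith
  · rw [div_le_iff₀ hS]
    exact upper.trans
      (mul_le_mul_of_nonneg_right ((le_max_right _ _).trans (le_max_right _ _)) hS.le)
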